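/- Let Λ be a nonempty class of probability mass functions on ℕ+ and let p̂(k) = sup_{P ∈ Λ} P(k) for k ∈ ℕ+. Then for every positive integer n, the minimax regret R*(Λ^n) is finite if and only if Σ_{k ∈ ℕ+} p̂(k) < ∞. -/

import Mathlib

/-!
A coding distribution `Q` has finite regret exactly when `Pⁿ ≤ C • Q` for one constant `C` and
all `P ∈ Λ`. If `S = ∑ p̂ < ∞`, the product of the normalized envelope `p̂ / S` is such a `Q`, with
`C = Sⁿ`. Conversely, summing `Pⁿ ≤ C • Q` over all but the first coordinate gives `P ≤ C • ν`
for the first marginal `ν` of `Q`, hence `p̂ ≤ C • ν` and `∑ p̂ ≤ C`.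
-/

open scoped ENNReal BigOperators

noncomputable section

/-- `p` is a probability mass function on `α`. -/
def IsPmf {α : Type*} (p : α → ℝ) : Prop := (∀ a, 0 ≤ p a) ∧ HasSum p 1

/-- The `n`-fold product probability mass function. -/
def prodPmf {α : Type*} (p : α → ℝ) (n : ℕ) : (Fin n → α) → ℝ :=
  fun x => ∏ i, p (x i)

/-- base-2 logarithm of the ratio `a / b`, valued in `[0,∞]`:
it is `⊤` when `b = 0 < a`, and clipped at `0` from below (which does not affect
the suprema defining minimax regret, which are always nonnegative). -/
def regretTerm (a b : ℝ) : ℝ≥0∞ :=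
  if a ≤ 0 then 0 else if b ≤ 0 then ⊤ else ENNReal.ofReal (Real.logb 2 (a / b))

/-- Minimax regret (base 2) of the class `Λ` for word length `n`, valued in `[0,∞]`. -/
def minimaxRegret {α : Type*} (Λ : Set (α → ℝ)) (n : ℕ) : ℝ≥0∞ :=
  ⨅ (Q : (Fin n → α) → ℝ) (_ : IsPmf Q),
    ⨆ (x : Fin n → α), ⨆ P ∈ Λ, regretTerm (prodPmf P n x) (Q x)

/- Kullback-Leibler divergence `D(p‖q)` in base 2, valued in `[0,∞]`.
It is `⊤` unless `q` dominates `p`; otherwise it is computed through the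
pointwise-nonnegative decomposition `p log(p/q) + q - p` (summing to
`Σ p log(p/q)` since `Σ p = Σ q = 1`), converted from nats to bits. -/
open Classical in
def klDiv2 {α : Type*} (p q : α → ℝ) : ℝ≥0∞ :=
  if ∃ a, q a = 0 ∧ 0 < p a then ⊤
  else (∑' a, ENNReal.ofReal (p a * Real.log (p a / q a) + q a - p a)) /
       ENNReal.ofReal (Real.log 2)

/-- Minimax redundancy (base 2) of the class `Λ` for word length `n`, valued in `[0,∞]`. -/
def minimaxRedundancy {α : Type*} (Λ : Set (α → ℝ)) (n : ℕ) : ℝ≥0∞ :=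
  ⨅ (Q : (Fin n → α) → ℝ) (_ : IsPmf Q), ⨆ P ∈ Λ, klDiv2 (prodPmf P n) Q

/-- The envelope class defined by the envelope function `f`. -/
def envClass (f : ℕ+ → ℝ) : Set (ℕ+ → ℝ) := {P | IsPmf P ∧ ∀ k, P k ≤ f k}

section Pmf

variable {α : Type*}

lemma isPmf_iff_tsum_ofReal {p : α → ℝ} :
    IsPmf p ↔ (∀ a, 0 ≤ p a) ∧ ∑' a, ENNReal.ofReal (p a) = 1 := by
  refine and_congr_right fun hp => ⟨fun h => ?_, fun h => ?_⟩
  · rw [← ENNReal.ofReal_tsum_of_nonneg hp h.summable, h.tsum_eq, ENNReal.ofReal_one]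
  · have hsum := ENNReal.hasSum_toReal (f := fun a => ENNReal.ofReal (p a)) (by simp [h])
    rw [← ENNReal.tsum_toReal_eq fun _ => ENNReal.ofReal_ne_top, h, ENNReal.toReal_one] at hsum
    simpa only [ENNReal.toReal_ofReal (hp _)] using hsum

lemma tsum_fin_succ_cons {m : ℕ} (f : (Fin (m + 1) → α) → ℝ≥0∞) :
    ∑' x, f x = ∑' (a) (y : Fin m → α), f (Fin.cons a y) := by
  rw [← (Fin.consEquiv fun _ => α).tsum_eq, ENNReal.tsum_prod']
  rfl

lemma prodPmf_cons (p : α → ℝ) {m : ℕ} (a : α) (y : Fin m → α) :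
    prodPmf p (m + 1) (Fin.cons a y) = p a * prodPmf p m y := by
  simp [prodPmf, Fin.prod_univ_succ]

lemma tsum_ofReal_prodPmf {p : α → ℝ} (hp : ∀ a, 0 ≤ p a) (n : ℕ) :
    ∑' x, ENNReal.ofReal (prodPmf p n x) = (∑' a, ENNReal.ofReal (p a)) ^ n := by
  induction n with
  | zero => simp [prodPmf]
  | succ m ih =>
    simp_rw [tsum_fin_succ_cons, prodPmf_cons, ENNReal.ofReal_mul (hp _), ENNReal.tsum_mul_left, ih,
      ENNReal.tsum_mul_right, pow_succ']

lemma IsPmf.prodPmf {p : α → ℝ} (hp : IsPmf p) (n : ℕ) : IsPmf (prodPmf p n) := by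
  rw [isPmf_iff_tsum_ofReal] at hp ⊢
  exact ⟨fun x => Finset.prod_nonneg fun i _ => hp.1 (x i),
    by rw [tsum_ofReal_prodPmf hp.1, hp.2, one_pow]⟩

lemma prodPmf_le_pow_mul_prodPmf {p q : α → ℝ} {c : ℝ} (hp : ∀ a, 0 ≤ p a)
    (hpq : ∀ a, p a ≤ c * q a) (n : ℕ) (x : Fin n → α) :
    prodPmf p n x ≤ c ^ n * prodPmf q n x := by
  calc prodPmf p n x ≤ ∏ i, c * q (x i) :=
        Finset.prod_le_prod (fun i _ => hp (x i)) fun i _ => hpq (x i)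
    _ = c ^ n * prodPmf q n x := by
        rw [Finset.prod_mul_distrib, Finset.prod_const, Finset.card_univ, Fintype.card_fin]; rfl

end Pmf

section Regret

lemma le_two_rpow_mul_of_regretTerm_le {a b : ℝ} {B : ℝ≥0∞} (hb : 0 ≤ b) (hB : B ≠ ⊤)
    (h : regretTerm a b ≤ B) : a ≤ 2 ^ B.toReal * b := by
  unfold regretTerm at h
  split_ifs at h with ha hb0
  · exact ha.trans (mul_nonneg (Real.rpow_nonneg zero_le_two _) hb)
  · exact absurd (top_le_iff.1 h) hB
  · have hab : 0 < a / b := div_pos (not_le.1 ha) (not_le.1 hb0)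
    rw [ENNReal.ofReal_le_iff_le_toReal hB, Real.logb_le_iff_le_rpow one_lt_two hab,
      div_le_iff₀ (not_le.1 hb0)] at h
    exact h

lemma regretTerm_le_of_le_mul {a b M : ℝ} (hM : 1 ≤ M) (h : a ≤ M * b) :
    regretTerm a b ≤ ENNReal.ofReal (Real.logb 2 M) := by
  unfold regretTerm
  split_ifs with ha hb
  · exact zero_le
  · nlinarith
  · have hab : 0 < a / b := div_pos (not_le.1 ha) (not_le.1 hb)
    exact ENNReal.ofReal_le_ofReal <| Real.logb_le_logb_of_le one_lt_two hab <|
      (div_le_iff₀ (not_le.1 hb)).2 h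

lemma minimaxRegret_lt_top_iff {α : Type*} (Λ : Set (α → ℝ)) (n : ℕ) :
    minimaxRegret Λ n < ⊤ ↔
      ∃ Q, IsPmf Q ∧ ∃ C : ℝ, ∀ P ∈ Λ, ∀ x, prodPmf P n x ≤ C * Q x := by
  constructor
  · intro h
    simp only [minimaxRegret, iInf_lt_iff] at h
    obtain ⟨Q, hQ, hB⟩ := h
    refine ⟨Q, hQ, _, fun P hP x => le_two_rpow_mul_of_regretTerm_le (hQ.1 x) hB.ne ?_⟩
    exact (le_iSup₂ (f := fun P _ => regretTerm (prodPmf P n x) (Q x)) P hP).trans <|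
      le_iSup (fun x => ⨆ P ∈ Λ, regretTerm (prodPmf P n x) (Q x)) x
  · rintro ⟨Q, hQ, C, hdom⟩
    refine lt_of_le_of_lt ?_ (ENNReal.ofReal_lt_top (r := Real.logb 2 (max C 1)))
    refine iInf₂_le_of_le Q hQ <| iSup_le fun x => iSup₂_le fun P hP => ?_
    exact regretTerm_le_of_le_mul (le_max_right C 1) <|
      (hdom P hP x).trans (mul_le_mul_of_nonneg_right (le_max_left C 1) (hQ.1 x))

end Regret

section MaxLikelihood

variable {α : Type*}

def maxLikelihood (Λ : Set (α → ℝ)) (a : α) : ℝ≥0∞ := ⨆ P ∈ Λ, ENNReal.ofReal (P a)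

lemma ofReal_le_maxLikelihood {Λ : Set (α → ℝ)} {P : α → ℝ} (hP : P ∈ Λ) (a : α) :
    ENNReal.ofReal (P a) ≤ maxLikelihood Λ a :=
  le_iSup₂ (f := fun P _ => ENNReal.ofReal (P a)) P hP

lemma tsum_maxLikelihood_le_of_dominated {Λ : Set (α → ℝ)} (hpmf : ∀ P ∈ Λ, IsPmf P) {m : ℕ}
    {Q : (Fin (m + 1) → α) → ℝ} (hQ : IsPmf Q) {C : ℝ}
    (hdom : ∀ P ∈ Λ, ∀ x, prodPmf P (m + 1) x ≤ C * Q x) :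
    ∑' a, maxLikelihood Λ a ≤ ENNReal.ofReal C := by
  set ν : α → ℝ≥0∞ := fun a => ∑' y : Fin m → α, ENNReal.ofReal (Q (Fin.cons a y))
  have hν : ∑' a, ν a = 1 := by
    rw [← (isPmf_iff_tsum_ofReal.1 hQ).2, tsum_fin_succ_cons]
  have hle : ∀ a, maxLikelihood Λ a ≤ ENNReal.ofReal C * ν a := by
    refine fun a => iSup₂_le fun P hPΛ => ?_
    have hP := isPmf_iff_tsum_ofReal.1 (hpmf P hPΛ)
    calc ENNReal.ofReal (P a) = ∑' y, ENNReal.ofReal (prodPmf P (m + 1) (Fin.cons a y)) := by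
          simp_rw [prodPmf_cons, ENNReal.ofReal_mul (hP.1 a), ENNReal.tsum_mul_left,
            tsum_ofReal_prodPmf hP.1, hP.2, one_pow, mul_one]
      _ ≤ ∑' y, ENNReal.ofReal C * ENNReal.ofReal (Q (Fin.cons a y)) :=
          ENNReal.tsum_le_tsum fun y => (ENNReal.ofReal_le_ofReal (hdom P hPΛ _)).trans_eq
            (ENNReal.ofReal_mul' (hQ.1 _))
      _ = ENNReal.ofReal C * ν a := ENNReal.tsum_mul_left
  calc ∑' a, maxLikelihood Λ a ≤ ∑' a, ENNReal.ofReal C * ν a := ENNReal.tsum_le_tsum hle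
    _ = ENNReal.ofReal C := by rw [ENNReal.tsum_mul_left, hν, mul_one]

lemma exists_isPmf_toReal_le_tsum_mul {f : α → ℝ≥0∞} (h0 : ∑' a, f a ≠ 0)
    (htop : ∑' a, f a ≠ ⊤) : ∃ q, IsPmf q ∧ ∀ a, (f a).toReal ≤ (∑' a, f a).toReal * q a := by
  set S := ∑' a, f a
  have hfin : ∀ a, f a / S ≠ ⊤ := fun a =>
    ENNReal.div_ne_top (ne_top_of_le_ne_top htop (ENNReal.le_tsum a)) h0
  refine ⟨fun a => (f a / S).toReal, isPmf_iff_tsum_ofReal.2 ⟨fun a => ENNReal.toReal_nonneg, ?_⟩,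
    fun a => ?_⟩
  · simp_rw [ENNReal.ofReal_toReal (hfin _), div_eq_mul_inv, ENNReal.tsum_mul_right]
    exact ENNReal.mul_inv_cancel h0 htop
  · rw [← ENNReal.toReal_mul, ENNReal.mul_div_cancel h0 htop]

lemma exists_isPmf_dominating_prodPmf {Λ : Set (α → ℝ)} (hΛ : Λ.Nonempty)
    (hpmf : ∀ P ∈ Λ, IsPmf P) (hS : ∑' a, maxLikelihood Λ a ≠ ⊤) (n : ℕ) :
    ∃ Q, IsPmf Q ∧ ∃ C : ℝ, ∀ P ∈ Λ, ∀ x, prodPmf P n x ≤ C * Q x := by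
  obtain ⟨P₀, hP₀⟩ := hΛ
  have h0 : ∑' a, maxLikelihood Λ a ≠ 0 := by
    refine (lt_of_lt_of_le one_pos ?_).ne'
    rw [← (isPmf_iff_tsum_ofReal.1 (hpmf P₀ hP₀)).2]
    exact ENNReal.tsum_le_tsum (ofReal_le_maxLikelihood hP₀)
  obtain ⟨q, hq, hle⟩ := exists_isPmf_toReal_le_tsum_mul h0 hS
  refine ⟨prodPmf q n, hq.prodPmf n, (∑' a, maxLikelihood Λ a).toReal ^ n,
    fun P hP => prodPmf_le_pow_mul_prodPmf (hpmf P hP).1 (fun a => ?_) n⟩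
  refine le_trans ?_ (hle a)
  rw [← ENNReal.ofReal_le_iff_le_toReal (ne_top_of_le_ne_top hS (ENNReal.le_tsum a))]
  exact ofReal_le_maxLikelihood hP a

end MaxLikelihood

/-- the minimax regret is finite iff the maximal likelihood `p̂` is summable. -/
theorem stmt4 (Lam : Set (ℕ+ → ℝ)) (hLam : Lam.Nonempty) (hpmf : ∀ P ∈ Lam, IsPmf P)
    (n : ℕ) (hn : 1 ≤ n) :
    minimaxRegret Lam n < ⊤ ↔ (∑' k : ℕ+, ⨆ P ∈ Lam, ENNReal.ofReal (P k)) < ⊤ := by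
  obtain ⟨m, rfl⟩ := Nat.exists_eq_add_of_le' hn
  change _ ↔ ∑' k, maxLikelihood Lam k < ⊤
  rw [minimaxRegret_lt_top_iff]
  constructor
  · rintro ⟨Q, hQ, C, hdom⟩
    exact (tsum_maxLikelihood_le_of_dominated hpmf hQ hdom).trans_lt ENNReal.ofReal_lt_top
  · exact fun hS => exists_isPmf_dominating_prodPmf hLam hpmf hS.ne _
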